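/- Operator Jensen inequality for isometries: if f : [0,∞) → ℝ is operator convex and V : H → K is an isometry, then for every positive semidefinite operator X on K, V† f(X) V ≥ f(V† X V) in the Loewner order. -/

import Mathlib

open Matrix MeasureTheory
open scoped Kronecker ComplexOrder

open scoped Classical
noncomputable section

variable {n : Type*} [Fintype n] [DecidableEq n]

/-- positive semidefinite square root (total; junk value `0` off PSD matrices) -/
def msqrt (A : Matrix n n ℂ) : Matrix n n ℂ :=
  if h : A.PosSemidef then
    (h.1.eigenvectorUnitary : Matrix n n ℂ) *
      Matrix.diagonal ((↑) ∘ (√·) ∘ h.1.eigenvalues) *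
      (star h.1.eigenvectorUnitary : Matrix n n ℂ)
  else 0

/-- trace norm -/
def traceNorm (A : Matrix n n ℂ) : ℝ :=
  ((msqrt (Aᴴ * A)).trace).re

/-- Hilbert–Schmidt norm -/
def hsNorm (A : Matrix n n ℂ) : ℝ :=
  Real.sqrt ((Aᴴ * A).trace).re

/-- apply a scalar function via functional calculus (total) -/
def matFun (f : ℝ → ℝ) (A : Matrix n n ℂ) : Matrix n n ℂ :=
  if h : A.IsHermitian then
    (h.eigenvectorUnitary : Matrix n n ℂ) *
      Matrix.diagonal (fun i => (f (h.eigenvalues i) : ℂ)) *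
      (h.eigenvectorUnitary : Matrix n n ℂ)ᴴ
  else 0

def minEig (A : Matrix n n ℂ) : ℝ :=
  if h : A.IsHermitian then ⨅ i, h.eigenvalues i else 0

def minPosEig (A : Matrix n n ℂ) : ℝ :=
  if h : A.IsHermitian then sInf {x : ℝ | x ≠ 0 ∧ ∃ i, h.eigenvalues i = x} else 0

def opNorm {m : Type*} [Fintype m] (A : Matrix m n ℂ) : ℝ :=
  ‖LinearMap.toContinuousLinearMap (Matrix.toEuclideanLin A)‖

variable {a b : Type*} [Fintype a] [DecidableEq a] [Fintype b] [DecidableEq b]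

/-- partial trace over the second tensor factor -/
def ptraceB (M : Matrix (a × b) (a × b) ℂ) : Matrix a a ℂ :=
  Matrix.of fun i j => ∑ k : b, M (i, k) (j, k)

/-- Petz recovery map for `σ` and the partial trace over `B` -/
def petz (σ : Matrix (a × b) (a × b) ℂ) (X : Matrix a a ℂ) : Matrix (a × b) (a × b) ℂ :=
  msqrt σ * (((msqrt (ptraceB σ))⁻¹ * X * (msqrt (ptraceB σ))⁻¹) ⊗ₖ (1 : Matrix b b ℂ)) *
    msqrt σ

/-- isometric extension of the Petz recovery channel -/
def petzV (σ : Matrix (a × b) (a × b) ℂ) : Matrix ((a × b) × (a × b)) (a × a) ℂ :=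
  (msqrt σ ⊗ₖ (1 : Matrix (a × b) (a × b) ℂ)) *
    Matrix.of (fun p q =>
      (msqrt (ptraceB σ))⁻¹ p.1.1 q.1 *
        (if p.2.1 = q.2 ∧ p.1.2 = p.2.2 then 1 else 0))

/-- canonical purification of `σ`, as a vector indexed by `n × n` -/
def purif (σ : Matrix n n ℂ) : n × n → ℂ :=
  fun p => msqrt σ p.1 p.2

/-- Petz quasi-relative entropy `Q_f(ρ‖σ)` -/
def Qf (f : ℝ → ℝ) (ρ σ : Matrix n n ℂ) : ℝ :=
  (dotProduct (star (purif σ)) ((matFun f (σ⁻¹ ⊗ₖ ρᵀ)) *ᵥ purif σ)).re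

/-- operator convexity of `f` on `[0,∞)` (Loewner order stated via `PosSemidef` differences) -/
def OpConvexOn (f : ℝ → ℝ) : Prop :=
  ∀ (k : ℕ) (A B : Matrix (Fin k) (Fin k) ℂ), A.PosSemidef → B.PosSemidef →
    ∀ lam : ℝ, 0 ≤ lam → lam ≤ 1 →
      (((lam : ℂ) • matFun f A + ((1 - lam : ℝ) : ℂ) • matFun f B)
        - matFun f ((lam : ℂ) • A + ((1 - lam : ℝ) : ℂ) • B)).PosSemidef

end

open Classical
variable {n : Type*} [Fintype n] [DecidableEq n]
variable {a b : Type*} [Fintype a] [DecidableEq a] [Fintype b] [DecidableEq b]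


/-! The unitary, self-adjoint dilation `U = [[1 - V Vᴴ, V], [Vᴴ, 0]]` of the isometry `V` turns
`Z = Uᴴ (X ⊕ 0) U` into a positive matrix whose lower-right corner is `Vᴴ X V`, while the same
corner of `f(Z) = Uᴴ (f(X) ⊕ f(0)) U` is `Vᴴ f(X) V`. So it suffices to show that `f` of a corner
is dominated by the corner of `f`. The pinching `Z ↦ diag(Z₁₁, Z₂₂)` is the average of `Z` and
its conjugate by the unitary `diag(1, -1)`, so operator convexity gives
`f(diag(Z₁₁, Z₂₂)) ≤ diag(f(Z)₁₁, f(Z)₂₂)`, and the lower-right corners are compared. -/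

section

open Polynomial Matrix

variable {s t : Type*} [Fintype s] [DecidableEq s] [Fintype t] [DecidableEq t]

theorem matFun_eq_cfc (f : ℝ → ℝ) {A : Matrix s s ℂ} (hA : A.IsHermitian) :
    matFun f A = cfc f A := by
  rw [hA.cfc_eq, matFun, dif_pos hA]
  rfl

theorem Set.Finite.exists_eqOn_eval {S : Set ℝ} (hS : S.Finite) (f : ℝ → ℝ) :
    ∃ p : ℝ[X], S.EqOn f p.eval :=
  ⟨Lagrange.interpolate hS.toFinset id f, fun _ hx =>
    (Lagrange.eval_interpolate_at_node f (Set.injOn_id _) (hS.mem_toFinset.mpr hx)).symm⟩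

theorem cfc_eq_aeval_of_eqOn {f : ℝ → ℝ} {A : Matrix s s ℂ} (hA : A.IsHermitian)
    {S : Set ℝ} (hS : spectrum ℝ A ⊆ S) {p : ℝ[X]} (hp : S.EqOn f p.eval) :
    cfc f A = aeval A p := by
  rw [cfc_congr (hp.mono hS), cfc_polynomial p A hA.isSelfAdjoint]

theorem AlgHom.map_cfc_of_isHermitian (φ : Matrix s s ℂ →ₐ[ℝ] Matrix t t ℂ) (f : ℝ → ℝ)
    {A : Matrix s s ℂ} (hA : A.IsHermitian) (hφA : (φ A).IsHermitian) :
    φ (cfc f A) = cfc f (φ A) := by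
  obtain ⟨p, hp⟩ := (A.finite_real_spectrum.union (φ A).finite_real_spectrum).exists_eqOn_eval f
  rw [cfc_eq_aeval_of_eqOn hA Set.subset_union_left hp,
    cfc_eq_aeval_of_eqOn hφA Set.subset_union_right hp, aeval_algHom_apply]

theorem cfc_conjTranspose_mul_mul_of_mem_unitary (f : ℝ → ℝ) {U A : Matrix s s ℂ}
    (hU : U ∈ unitary (Matrix s s ℂ)) (hA : A.IsHermitian) :
    cfc f (Uᴴ * A * U) = Uᴴ * cfc f A * U := by
  have := (Unitary.conjStarAlgAut ℝ _ (star ⟨U, hU⟩)).toAlgEquiv.toAlgHom.map_cfc_of_isHermitian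
    f hA (by simpa [star_eq_conjTranspose] using isHermitian_conjTranspose_mul_mul U hA)
  simpa [star_eq_conjTranspose] using this.symm

theorem cfc_reindex (f : ℝ → ℝ) (e : s ≃ t) {A : Matrix s s ℂ} (hA : A.IsHermitian) :
    cfc f (reindex e e A) = reindex e e (cfc f A) :=
  ((reindexAlgEquiv ℝ ℂ e).toAlgHom.map_cfc_of_isHermitian f hA (hA.reindex e)).symm

def fromBlocksDiagonalAlgHom : Matrix s s ℂ × Matrix t t ℂ →ₐ[ℝ] Matrix (s ⊕ t) (s ⊕ t) ℂ where
  toFun P := fromBlocks P.1 0 0 P.2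
  map_one' := fromBlocks_one
  map_mul' P Q := by simp [fromBlocks_multiply]
  map_zero' := fromBlocks_zero
  map_add' P Q := by simp [fromBlocks_add]
  commutes' r := by
    simp [Algebra.algebraMap_eq_smul_one, fromBlocks_smul, ← fromBlocks_one]

theorem cfc_fromBlocks_zero (f : ℝ → ℝ) {A : Matrix s s ℂ} {B : Matrix t t ℂ}
    (hA : A.IsHermitian) (hB : B.IsHermitian) :
    cfc f (fromBlocks A 0 0 B) = fromBlocks (cfc f A) 0 0 (cfc f B) := by
  have hAB : (fromBlocks A 0 0 B).IsHermitian := hA.fromBlocks (by simp) hB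
  -- interpolating on all three spectra spares us computing the spectrum of the block matrix
  obtain ⟨p, hp⟩ := ((A.finite_real_spectrum.union B.finite_real_spectrum).union
    (fromBlocks A 0 0 B).finite_real_spectrum).exists_eqOn_eval f
  rw [cfc_eq_aeval_of_eqOn hAB Set.subset_union_right hp,
    cfc_eq_aeval_of_eqOn hA (Set.subset_union_left.trans Set.subset_union_left) hp,
    cfc_eq_aeval_of_eqOn hB (Set.subset_union_right.trans Set.subset_union_left) hp]
  exact (aeval_algHom_apply fromBlocksDiagonalAlgHom (A, B) p).trans
    (congrArg fromBlocksDiagonalAlgHom (aeval_prod_apply (A, B) p))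

omit [DecidableEq s] [DecidableEq t] in
theorem Matrix.PosSemidef.fromBlocks_zero {R : Type*} [CommRing R] [PartialOrder R]
    [StarRing R] [StarOrderedRing R] {A : Matrix s s R} {D : Matrix t t R}
    (hA : A.PosSemidef) (hD : D.PosSemidef) : (fromBlocks A 0 0 D).PosSemidef := by
  rw [posSemidef_iff_dotProduct_mulVec] at *
  refine ⟨hA.1.fromBlocks (by simp) hD.1, fun x => ?_⟩
  have := add_nonneg (hA.2 (x ∘ Sum.inl)) (hD.2 (x ∘ Sum.inr))
  rw [← Sum.elim_comp_inl_inr x, fromBlocks_mulVec]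
  simpa [dotProduct, Fintype.sum_sum_type] using this

theorem OpConvexOn.posSemidef_convexComb_cfc_sub {f : ℝ → ℝ} (hf : OpConvexOn f)
    {A B : Matrix s s ℂ} (hA : A.PosSemidef) (hB : B.PosSemidef) {lam : ℝ} (h0 : 0 ≤ lam)
    (h1 : lam ≤ 1) :
    (lam • cfc f A + (1 - lam) • cfc f B - cfc f (lam • A + (1 - lam) • B)).PosSemidef := by
  set e := Fintype.equivFin s
  have hAB : (lam • A + (1 - lam) • B).IsHermitian :=
    ((hA.smul h0).add (hB.smul (sub_nonneg.2 h1))).1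
  have hre : lam • reindex e e A + (1 - lam) • reindex e e B =
      reindex e e (lam • A + (1 - lam) • B) := rfl
  have key := hf _ _ _ (hA.submatrix e.symm) (hB.submatrix e.symm) lam h0 h1
  simp only [Complex.coe_smul, ← reindex_apply, hre] at key
  rw [matFun_eq_cfc f (hA.1.reindex e), matFun_eq_cfc f (hB.1.reindex e),
    matFun_eq_cfc f (hAB.reindex e), cfc_reindex f e hA.1, cfc_reindex f e hB.1,
    cfc_reindex f e hAB] at key
  exact (posSemidef_submatrix_equiv e.symm).mp key

theorem fromBlocks_one_neg_one_mem_unitary :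
    (fromBlocks 1 0 0 (-1) : Matrix (s ⊕ t) (s ⊕ t) ℂ) ∈ unitary (Matrix (s ⊕ t) (s ⊕ t) ℂ) :=
  Unitary.mem_iff.2
    ⟨by simp [star_eq_conjTranspose, fromBlocks_conjTranspose, fromBlocks_multiply],
      by simp [star_eq_conjTranspose, fromBlocks_conjTranspose, fromBlocks_multiply]⟩

theorem half_smul_add_conj_fromBlocks_one_neg_one (M : Matrix (s ⊕ t) (s ⊕ t) ℂ) :
    (1 / 2 : ℝ) • M + (1 / 2 : ℝ) • ((fromBlocks 1 0 0 (-1))ᴴ * M * fromBlocks 1 0 0 (-1)) =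
      fromBlocks M.toBlocks₁₁ 0 0 M.toBlocks₂₂ := by
  conv_lhs => rw [← fromBlocks_toBlocks M]
  simp [fromBlocks_conjTranspose, fromBlocks_multiply, fromBlocks_smul, fromBlocks_add]
  constructor <;> module

theorem OpConvexOn.posSemidef_toBlocks₂₂_cfc_sub {f : ℝ → ℝ} (hf : OpConvexOn f)
    {Z : Matrix (s ⊕ t) (s ⊕ t) ℂ} (hZ : Z.PosSemidef) :
    ((cfc f Z).toBlocks₂₂ - cfc f Z.toBlocks₂₂).PosSemidef := by
  have key := hf.posSemidef_convexComb_cfc_sub hZ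
    (hZ.conjTranspose_mul_mul_same (fromBlocks 1 0 0 (-1))) (lam := 1 / 2) (by norm_num)
    (by norm_num)
  rw [show (1 - 1 / 2 : ℝ) = 1 / 2 by norm_num,
    cfc_conjTranspose_mul_mul_of_mem_unitary f fromBlocks_one_neg_one_mem_unitary hZ.1,
    half_smul_add_conj_fromBlocks_one_neg_one, half_smul_add_conj_fromBlocks_one_neg_one,
    cfc_fromBlocks_zero f (show Z.toBlocks₁₁.IsHermitian from hZ.1.submatrix Sum.inl)
      (show Z.toBlocks₂₂.IsHermitian from hZ.1.submatrix Sum.inr)] at key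
  exact key.submatrix Sum.inr

def isometryDilation (V : Matrix s t ℂ) : Matrix (s ⊕ t) (s ⊕ t) ℂ :=
  fromBlocks (1 - V * Vᴴ) V Vᴴ 0

omit [Fintype s] [DecidableEq t] in
theorem conjTranspose_isometryDilation (V : Matrix s t ℂ) :
    (isometryDilation V)ᴴ = isometryDilation V := by
  simp [isometryDilation, fromBlocks_conjTranspose]

theorem isometryDilation_mul_self {V : Matrix s t ℂ} (hV : Vᴴ * V = 1) :
    isometryDilation V * isometryDilation V = 1 := by
  have hVVV : Vᴴ * (V * Vᴴ) = Vᴴ := by rw [← Matrix.mul_assoc, hV, Matrix.one_mul]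
  rw [isometryDilation, fromBlocks_multiply, ← fromBlocks_one]
  congr 1 <;> simp [Matrix.sub_mul, Matrix.mul_sub, Matrix.mul_assoc, hV, hVVV]

theorem isometryDilation_mem_unitary {V : Matrix s t ℂ} (hV : Vᴴ * V = 1) :
    isometryDilation V ∈ unitary (Matrix (s ⊕ t) (s ⊕ t) ℂ) := by
  rw [Unitary.mem_iff, star_eq_conjTranspose, conjTranspose_isometryDilation]
  exact ⟨isometryDilation_mul_self hV, isometryDilation_mul_self hV⟩

theorem toBlocks₂₂_conj_isometryDilation (V : Matrix s t ℂ) (P : Matrix s s ℂ)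
    (Q : Matrix t t ℂ) :
    ((isometryDilation V)ᴴ * fromBlocks P 0 0 Q * isometryDilation V).toBlocks₂₂ =
      Vᴴ * P * V := by
  rw [conjTranspose_isometryDilation, isometryDilation, fromBlocks_multiply, fromBlocks_multiply]
  simp

end

/-- Operator Jensen inequality for isometries: for operator convex `f` on `[0,∞)`,
isometry `V`, and positive semidefinite `X`, `V† f(X) V ≥ f(V† X V)`. -/
theorem operator_jensen_isometry {m : Type*} [Fintype m] [DecidableEq m]
    (f : ℝ → ℝ) (hf : OpConvexOn f)
    (V : Matrix m n ℂ) (hV : Vᴴ * V = 1)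
    (X : Matrix m m ℂ) (hX : X.PosSemidef) :
    (Vᴴ * matFun f X * V - matFun f (Vᴴ * X * V)).PosSemidef := by
  have hY : (Matrix.fromBlocks X 0 0 0 : Matrix (m ⊕ n) (m ⊕ n) ℂ).PosSemidef :=
    hX.fromBlocks_zero .zero
  have key := hf.posSemidef_toBlocks₂₂_cfc_sub
    (hY.conjTranspose_mul_mul_same (isometryDilation V))
  rw [cfc_conjTranspose_mul_mul_of_mem_unitary f (isometryDilation_mem_unitary hV) hY.1,
    cfc_fromBlocks_zero f hX.1 Matrix.isHermitian_zero, toBlocks₂₂_conj_isometryDilation,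
    toBlocks₂₂_conj_isometryDilation] at key
  rwa [matFun_eq_cfc f hX.1, matFun_eq_cfc f (Matrix.isHermitian_conjTranspose_mul_mul V hX.1)]
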